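/- Fix integers k ≥ 2 and h ≥ 1, and let T be a finite rooted ordered tree in which every node has exactly k² or 0 children, every node has depth at most h (the root has depth 0), and every node at depth h is a leaf. Define the modified BP encoding B(T) recursively on nodes with their depth: a leaf is encoded as '()'; an internal node at depth strictly less than h−1 is encoded as '(' followed by the encodings of its k² children followed by ')'; an internal node at depth exactly h−1 is encoded as '(())' (its children's values being stored separately in a bit array L'). Let t be the number of nodes of T at depth at most h−1 and ℓ the number of nodes at depth h. Then ℓ = k²·p where p is the number of internal nodes at depth h−1, the length of B(T) equals 2t + 2ℓ/k², and the length of L' equals ℓ. -/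

import Mathlib

/-- A finite rooted ordered tree: a single constructor taking the list of subtrees. -/
inductive OTree where
  | node : List OTree → OTree

/-- Every node of the tree has exactly `d` or `0` children. -/
inductive Arity (d : ℕ) : OTree → Prop
  | mk (ts : List OTree) : (ts.length = d ∨ ts = []) →
      (∀ t ∈ ts, Arity d t) → Arity d (.node ts)

/-- `depthBounded b t` : every node of `t` has depth at most `b` (the root of
`t` having depth 0) and every node at depth exactly `b` is a leaf. -/
def depthBounded : ℕ → OTree → Prop
  | 0, .node ts => ts = []
  | b + 1, .node ts => ∀ t ∈ ts, depthBounded b t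

/-- The modified BP encoding of the k²-tree (with `true` = '(' and `false` = ')'),
where `d` is the depth of the current node and `h` the total height:
a leaf is encoded as '()'; an internal node at depth exactly `h-1` is encoded as
'(())' (its children's bits being stored separately); any other internal node is
encoded as '(' followed by its children's encodings followed by ')'. -/
def encB (h : ℕ) : ℕ → OTree → List Bool
  | _, .node [] => [true, false]
  | d, .node (t :: ts) =>
    if d + 1 = h then [true, true, false, false]
    else true :: (((t :: ts).attach.map fun ⟨s, _⟩ => encB h (d + 1) s).flatten ++ [false])

/-- The number of nodes of the tree at depth exactly `d` (root at depth 0). -/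
def countAtDepth : ℕ → OTree → ℕ
  | 0, _ => 1
  | d + 1, .node ts => (ts.attach.map fun ⟨t, _⟩ => countAtDepth d t).sum

/-- The number of internal nodes (nodes with children) at depth exactly `d`. -/
def countInternalAtDepth : ℕ → OTree → ℕ
  | 0, .node ts => if ts.isEmpty then 0 else 1
  | d + 1, .node ts => (ts.attach.map fun ⟨t, _⟩ => countInternalAtDepth d t).sum


lemma countAtDepth_succ (d : ℕ) (ts : List OTree) :
    countAtDepth (d + 1) (.node ts) = (ts.map (countAtDepth d)).sum := by
  simp [countAtDepth, List.attach_map_val]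

lemma countInternalAtDepth_succ (d : ℕ) (ts : List OTree) :
    countInternalAtDepth (d + 1) (.node ts) = (ts.map (countInternalAtDepth d)).sum := by
  simp [countInternalAtDepth, List.attach_map_val]

lemma swap_sum (ts : List OTree) (n : ℕ) (f : ℕ → OTree → ℕ) :
    ∑ i ∈ Finset.range n, (ts.map (f i)).sum
      = (ts.map (fun c => ∑ i ∈ Finset.range n, f i c)).sum := by
  induction ts with
  | nil => simp
  | cons a l ih => simp [Finset.sum_add_distrib, ih]

lemma lemA (k : ℕ) : ∀ (m : ℕ), 1 ≤ m → ∀ (T : OTree), Arity (k ^ 2) T →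
    depthBounded m T →
    countAtDepth m T = k ^ 2 * countInternalAtDepth (m - 1) T := by
  intro m
  induction m with
  | zero => omega
  | succ m' ih =>
    intro _ T har hd
    obtain ⟨ts, hlen, hsub⟩ := har
    rcases Nat.eq_zero_or_pos m' with hm | hm
    · subst hm
      rcases ts with _ | ⟨a, l⟩
      · simp [countAtDepth, countInternalAtDepth]
      · rcases hlen with hl | hl
        · rw [countAtDepth_succ]
          have h1 : (a :: l).map (countAtDepth 0) = (a :: l).map (fun _ => 1) := by
            apply List.map_congr_left; intro t _; rfl
          have h2 : countInternalAtDepth 0 (OTree.node (a :: l)) = 1 := by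
            simp [countInternalAtDepth]
          rw [h1, h2]
          simp only [List.length_cons] at hl
          simp
          omega
        · simp at hl
    · obtain ⟨n, rfl⟩ : ∃ n, m' = n + 1 := ⟨m' - 1, by omega⟩
      rw [countAtDepth_succ]
      show _ = k ^ 2 * countInternalAtDepth (n + 1) (.node ts)
      rw [countInternalAtDepth_succ]
      have : ts.map (countAtDepth (n + 1))
          = ts.map (fun t => k ^ 2 * countInternalAtDepth n t) := by
        apply List.map_congr_left; intro t ht
        exact ih (by omega) t (hsub t ht) (hd t ht)
      rw [this, ← List.sum_map_mul_left]

lemma lemB (k h : ℕ) : ∀ (m : ℕ), 1 ≤ m → ∀ (d : ℕ), d + m = h → ∀ (T : OTree),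
    Arity (k ^ 2) T → depthBounded m T →
    (encB h d T).length
      = 2 * (∑ i ∈ Finset.range m, countAtDepth i T)
        + 2 * countInternalAtDepth (m - 1) T := by
  intro m
  induction m with
  | zero => omega
  | succ m' ih =>
    intro _ d hdm T har hd
    obtain ⟨ts, hlen, hsub⟩ := har
    rcases ts with _ | ⟨a, l⟩
    · -- leaf
      have h2 : ∀ i, countAtDepth (i + 1) (OTree.node []) = 0 := by
        intro i; rw [countAtDepth_succ]; simp
      have h3 : countInternalAtDepth m' (OTree.node []) = 0 := by
        cases m' with
        | zero => simp [countInternalAtDepth]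
        | succ n => rw [countInternalAtDepth_succ]; simp
      simp only [encB, List.length_cons, List.length_nil]
      rw [Finset.sum_range_succ', Nat.add_sub_cancel, h3]
      simp [h2, countAtDepth]
    · rcases Nat.eq_zero_or_pos m' with hm | hm
      · subst hm
        have hdh : d + 1 = h := by omega
        simp only [encB, if_pos hdh]
        have : countInternalAtDepth 0 (OTree.node (a :: l)) = 1 := by
          simp [countInternalAtDepth]
        rw [this]; simp [countAtDepth]
      · have hdh : ¬ (d + 1 = h) := by omega
        simp only [encB, if_neg hdh]
        rw [List.length_cons, List.length_append, List.length_flatten]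
        rw [List.map_map]
        have hmap : ((a :: l).attach.map fun x => List.length (encB h (d + 1) x.1))
            = (a :: l).map fun t => 2 * (∑ i ∈ Finset.range m', countAtDepth i t)
                + 2 * countInternalAtDepth (m' - 1) t := by
          rw [← List.attach_map_val (l := (a :: l)) (f := fun t => 2 * (∑ i ∈ Finset.range m', countAtDepth i t)
                + 2 * countInternalAtDepth (m' - 1) t)]
          apply List.map_congr_left
          intro ⟨t, ht⟩ _
          exact ih (by omega) (d + 1) (by omega) t (hsub t ht) (hd t ht)
        simp only [Function.comp_def] at hmap ⊢
        rw [hmap]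
        obtain ⟨n, rfl⟩ : ∃ n, m' = n + 1 := ⟨m' - 1, by omega⟩
        rw [Finset.sum_range_succ']
        have hca : countAtDepth 0 (OTree.node (a :: l)) = 1 := rfl
        rw [hca]
        have : ∀ i, countAtDepth (i + 1) (OTree.node (a :: l))
            = ((a :: l).map (countAtDepth i)).sum := fun i => countAtDepth_succ i _
        simp only [this]
        rw [swap_sum]
        show _ = 2 * (_ + 1) + 2 * countInternalAtDepth (n + 1) (OTree.node (a :: l))
        rw [countInternalAtDepth_succ]
        simp only [Nat.add_sub_cancel]
        have hkey : ((a :: l).map fun t => 2 * (∑ i ∈ Finset.range (n+1), countAtDepth i t)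
                + 2 * countInternalAtDepth n t).sum
            = 2 * ((a :: l).map fun c => ∑ i ∈ Finset.range (n+1), countAtDepth i c).sum
              + 2 * ((a :: l).map (countInternalAtDepth n)).sum := by
          rw [← List.sum_map_mul_left, ← List.sum_map_mul_left, ← List.sum_map_add]
        rw [hkey]
        simp only [List.length_cons, List.length_nil]
        omega

/-- for `k ≥ 2`, `h ≥ 1` and a tree `T` in which every node has
exactly `k²` or `0` children, every node has depth at most `h` and every node at
depth `h` is a leaf: with `t` the number of nodes at depth ≤ `h-1`, `ℓ` the
number of nodes at depth `h` and `p` the number of internal nodes at depth `h-1`,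
one has `ℓ = k²·p`, `|B(T)| = 2t + 2ℓ/k²`, and `|L'| = k²·p = ℓ`. -/
theorem stmt14 (k h : ℕ) (hk : 2 ≤ k) (hh : 1 ≤ h) (T : OTree)
    (har : Arity (k ^ 2) T) (hd : depthBounded h T) :
    countAtDepth h T = k ^ 2 * countInternalAtDepth (h - 1) T ∧
    (encB h 0 T).length =
      2 * (∑ d ∈ Finset.range h, countAtDepth d T) + (2 * countAtDepth h T) / k ^ 2 ∧
    k ^ 2 * countInternalAtDepth (h - 1) T = countAtDepth h T := by
  have hA := lemA k h hh T har hd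
  have hB := lemB k h h hh 0 (by omega) T har hd
  refine ⟨hA, ?_, hA.symm⟩
  rw [hB, hA]
  have hk2 : 0 < k ^ 2 := by positivity
  have : 2 * (k ^ 2 * countInternalAtDepth (h - 1) T)
      = k ^ 2 * (2 * countInternalAtDepth (h - 1) T) := by ring
  rw [this, Nat.mul_div_cancel_left _ hk2]
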